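/- Let Y, W be pointed metric spaces and T : Y → W Lipschitz with T(0)=0. Then T is MS-strongly Lipschitz p-summing if and only if the Lipschitz adjoint T^# : W^# → Y^# is p*-summing. -/

import Mathlib

open scoped TensorProduct
open NormedSpace Finset

noncomputable section

/-- The strong `ℓ_p^m` norm of a finite family in a normed space. -/
def strongLp {E : Type*} [NormedAddCommGroup E] (p : ℝ) {m : ℕ} (x : Fin m → E) : ℝ :=
  (∑ j, ‖x j‖ ^ p) ^ (1 / p)

/-- The weak `ℓ_p^{m,w}` norm of a finite family in a normed space. -/
def weakLp {E : Type*} [NormedAddCommGroup E] [NormedSpace ℝ E] (p : ℝ) {m : ℕ}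
    (x : Fin m → E) : ℝ :=
  sSup {r : ℝ | ∃ φ : StrongDual ℝ E, ‖φ‖ ≤ 1 ∧ r = (∑ j, |φ (x j)| ^ p) ^ (1 / p)}

/-- A continuous linear operator is `p`-summing. -/
def IsPSumming {E F : Type*} [NormedAddCommGroup E] [NormedSpace ℝ E]
    [NormedAddCommGroup F] [NormedSpace ℝ F] (p : ℝ) (u : E →L[ℝ] F) : Prop :=
  ∃ K > 0, ∀ (m : ℕ) (x : Fin m → E),
    strongLp p (fun j => u (x j)) ≤ K * weakLp p x

/-- A continuous linear operator is (Cohen) strongly `p`-summing (`q` is the conjugate of `p`). -/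
def IsStronglyPSumming {E F : Type*} [NormedAddCommGroup E] [NormedSpace ℝ E]
    [NormedAddCommGroup F] [NormedSpace ℝ F] (p q : ℝ) (u : E →L[ℝ] F) : Prop :=
  ∃ K > 0, ∀ (m : ℕ) (x : Fin m → E) (φ : Fin m → StrongDual ℝ F),
    ∑ j, |φ j (u (x j))| ≤ K * strongLp p x * weakLp q φ

/-- A continuous linear operator is (Cohen) `p`-nuclear (`q` is the conjugate of `p`). -/
def IsPNuclear {E F : Type*} [NormedAddCommGroup E] [NormedSpace ℝ E]
    [NormedAddCommGroup F] [NormedSpace ℝ F] (p q : ℝ) (u : E →L[ℝ] F) : Prop :=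
  ∃ K > 0, ∀ (m : ℕ) (x : Fin m → E) (φ : Fin m → StrongDual ℝ F),
    ∑ j, |φ j (u (x j))| ≤ K * weakLp p x * weakLp q φ

/-- The Chevet–Saphar norm `d_p` on a tensor product (`q` is the conjugate of `p`):
infimum over all finite representations of `z`. -/
def dpNorm {E G : Type*} [NormedAddCommGroup E] [NormedSpace ℝ E]
    [NormedAddCommGroup G] [NormedSpace ℝ G] (p q : ℝ) (z : TensorProduct ℝ E G) : ℝ :=
  sInf {r : ℝ | ∃ (m : ℕ) (n : Fin m → E) (h : Fin m → G),
    z = ∑ j, n j ⊗ₜ[ℝ] h j ∧ r = weakLp p n * strongLp q h}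

/-- The Chevet–Saphar norm `g_p` on a tensor product (`q` is the conjugate of `p`). -/
def gpNorm {E G : Type*} [NormedAddCommGroup E] [NormedSpace ℝ E]
    [NormedAddCommGroup G] [NormedSpace ℝ G] (p q : ℝ) (z : TensorProduct ℝ E G) : ℝ :=
  sInf {r : ℝ | ∃ (m : ℕ) (n : Fin m → E) (h : Fin m → G),
    z = ∑ j, n j ⊗ₜ[ℝ] h j ∧ r = strongLp p n * weakLp q h}

/-- The tensor norm `w_p` (`q` is the conjugate of `p`). -/
def wpNorm {E G : Type*} [NormedAddCommGroup E] [NormedSpace ℝ E]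
    [NormedAddCommGroup G] [NormedSpace ℝ G] (p q : ℝ) (z : TensorProduct ℝ E G) : ℝ :=
  sInf {r : ℝ | ∃ (m : ℕ) (n : Fin m → E) (h : Fin m → G),
    z = ∑ j, n j ⊗ₜ[ℝ] h j ∧ r = weakLp p n * weakLp q h}

/-- `E`, together with the map `δ : Y → E`, is (isometrically) the Lipschitz-free space
of the pointed metric space `(Y, y₀)`: `δ` sends the base point to `0`, is an isometric
embedding, has dense linear span, and the norm of finite combinations of point evaluations
is computed against the unit ball of `Lip₀(Y)`. -/
structure IsFreeSpace (Y : Type*) [MetricSpace Y] (y₀ : Y)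
    (E : Type*) [NormedAddCommGroup E] [NormedSpace ℝ E] [CompleteSpace E]
    (δ : Y → E) : Prop where
  map_base : δ y₀ = 0
  isometry : ∀ x y : Y, ‖δ x - δ y‖ = dist x y
  dense_span : (Submodule.span ℝ (Set.range δ)).topologicalClosure = ⊤
  norm_eq : ∀ (n : ℕ) (a : Fin n → ℝ) (x : Fin n → Y),
    ‖∑ i, a i • δ (x i)‖ =
      sSup {r : ℝ | ∃ s : Y → ℝ, LipschitzWith 1 s ∧ s y₀ = 0 ∧ r = |∑ i, a i * s (x i)|}

end

noncomputable section

variable {Y W FY FW : Type*} [MetricSpace Y] [MetricSpace W]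
  [NormedAddCommGroup FY] [NormedSpace ℝ FY] [NormedAddCommGroup FW] [NormedSpace ℝ FW]

/-- `T : Y → W` is MS-Lipschitz `p`-summing (`q` is the conjugate of `p`), the free spaces
of `Y` and `W` being realized as `FY`, `FW` via `δY`, `δW`.  Elements of `W^# = F(W)^*` are
encoded as elements of `Dual ℝ FW`, and `d_p^L` is the Chevet–Saphar norm computed in
`F(Y) ⊗ W^#`. -/
def MSLipPSumming (p q : ℝ) (δY : Y → FY) (δW : W → FW) (T : Y → W) : Prop :=
  ∃ K > 0, ∀ (k : ℕ) (x y : Fin k → Y) (f : Fin k → StrongDual ℝ FW),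
    |∑ l, (f l (δW (T (x l))) - f l (δW (T (y l))))| ≤
      K * dpNorm p q (∑ l, (δY (x l) - δY (y l)) ⊗ₜ[ℝ] f l)

/-- `T : Y → W` is MS-strongly Lipschitz `p`-summing (`q` is the conjugate of `p`). -/
def MSStronglyLipPSumming (p q : ℝ) (δY : Y → FY) (δW : W → FW) (T : Y → W) : Prop :=
  ∃ K > 0, ∀ (k : ℕ) (x y : Fin k → Y) (f : Fin k → StrongDual ℝ FW),
    |∑ l, (f l (δW (T (x l))) - f l (δW (T (y l))))| ≤
      K * gpNorm p q (∑ l, (δY (x l) - δY (y l)) ⊗ₜ[ℝ] f l)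

/-- `T : Y → W` is MS-Lipschitz `p`-nuclear (`q` is the conjugate of `p`). -/
def MSLipPNuclear (p q : ℝ) (δY : Y → FY) (δW : W → FW) (T : Y → W) : Prop :=
  ∃ K > 0, ∀ (k : ℕ) (x y : Fin k → Y) (f : Fin k → StrongDual ℝ FW),
    |∑ l, (f l (δW (T (x l))) - f l (δW (T (y l))))| ≤
      K * wpNorm p q (∑ l, (δY (x l) - δY (y l)) ⊗ₜ[ℝ] f l)

end

/-
Both conditions bound the pairing `μ ⊗ f ↦ (T^# f)(μ)` on `F(Y) ⊗ W^#` by a multiple of the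
Chevet–Saphar norm `g_p`: on molecules this pairing is exactly the left-hand side of the
MS-summing inequality. If `T^#` is `p*`-summing, Hölder's inequality on any representation
`z = ∑ μ_j ⊗ f_j` gives `|⟨z⟩| ≤ ‖(μ_j)‖_p ‖(T^# f_j)‖_{p*} ≤ K ‖(μ_j)‖_p ‖(f_j)‖^w_{p*}`.
Conversely, the MS inequality extends from molecules to all `∑ μ_j ⊗ f_j` with `μ_j` in the
dense span of `δ(Y)`; norming each `T^# f_j` on the unit ball of that span gives
`∑ c_j ‖T^# f_j‖ ≤ K ‖c‖_p ‖(f_j)‖^w_{p*}` for `c ≥ 0`, and the extremal choice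
`c_j = ‖T^# f_j‖^{p*-1}` in Hölder's inequality turns this into the `p*`-summing inequality.
-/

section Sequences

variable {E : Type*} [NormedAddCommGroup E]

lemma strongLp_nonneg (p : ℝ) {m : ℕ} (x : Fin m → E) : 0 ≤ strongLp p x := by
  unfold strongLp; positivity

lemma strongLp_mono {F : Type*} [NormedAddCommGroup F] {p : ℝ} (hp : 0 ≤ p) {m : ℕ}
    {x : Fin m → E} {y : Fin m → F} (h : ∀ j, ‖x j‖ ≤ ‖y j‖) : strongLp p x ≤ strongLp p y := by
  unfold strongLp
  exact Real.rpow_le_rpow (sum_nonneg fun _ _ => by positivity)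
    (sum_le_sum fun j _ => Real.rpow_le_rpow (norm_nonneg _) (h j) hp) (one_div_nonneg.2 hp)

lemma strongLp_le_of_forall_sum_mul_norm_le {p q : ℝ} (hpq : p.HolderConjugate q) {M : ℝ}
    (hM : 0 ≤ M) {m : ℕ} {v : Fin m → E}
    (h : ∀ c : Fin m → ℝ, (∀ j, 0 ≤ c j) → ∑ j, c j * ‖v j‖ ≤ M * strongLp p c) :
    strongLp q v ≤ M := by
  set A := ∑ j, ‖v j‖ ^ q
  have hA : A ≤ M * A ^ (1 / p) := by
    have hmul : ∀ j, ‖v j‖ ^ (q - 1) * ‖v j‖ = ‖v j‖ ^ q := fun j => by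
      rw [← Real.rpow_add_one' (norm_nonneg _) (by simpa using hpq.symm.ne_zero), sub_add_cancel]
    have hnorm : strongLp p (fun j => ‖v j‖ ^ (q - 1)) = A ^ (1 / p) := by
      refine congrArg (· ^ (1 / p)) (sum_congr rfl fun j _ => ?_)
      rw [Real.norm_of_nonneg (by positivity), ← Real.rpow_mul (norm_nonneg _),
        hpq.symm.sub_one_mul_conj]
    simpa only [hmul, hnorm] using h (fun j => ‖v j‖ ^ (q - 1)) fun j => by positivity
  have hvA : strongLp q v = A ^ (1 / q) := rfl
  rw [hvA]
  have hA_nonneg : 0 ≤ A := sum_nonneg fun j _ => by positivity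
  rcases hA_nonneg.eq_or_lt with hA_zero | hA_pos
  · rw [← hA_zero, Real.zero_rpow (one_div_ne_zero hpq.symm.ne_zero)]
    exact hM
  · have hsplit : A ^ (1 / q) * A ^ (1 / p) = A := by
      rw [← Real.rpow_add hA_pos, one_div, one_div, add_comm, hpq.inv_add_inv_eq_one, Real.rpow_one]
    refine le_of_mul_le_mul_right ?_ (Real.rpow_pos_of_pos hA_pos (1 / p))
    rwa [hsplit]

variable [NormedSpace ℝ E]

lemma weakLp_nonneg (p : ℝ) {m : ℕ} (x : Fin m → E) : 0 ≤ weakLp p x :=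
  Real.sSup_nonneg fun _ ⟨_, _, hr⟩ => hr ▸ by positivity

end Sequences

lemma exists_mem_norm_le_one_lt_apply {E : Type*} [NormedAddCommGroup E] [NormedSpace ℝ E]
    {s : Set E} (hs : Dense s) (g : StrongDual ℝ E) {r : ℝ} (hr : r < ‖g‖) :
    ∃ μ ∈ s, ‖μ‖ ≤ 1 ∧ r < g μ := by
  obtain ⟨μ₀, hμ₀, hr₀⟩ := g.exists_lt_apply_of_lt_opNorm hr
  have hU : {μ : E | ‖μ‖ < 1 ∧ r < g μ}.Nonempty := by
    rcases lt_abs.1 hr₀ with h | h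
    · exact ⟨μ₀, hμ₀, h⟩
    · exact ⟨-μ₀, by rwa [norm_neg], by rwa [map_neg]⟩
  obtain ⟨μ, hμs, hμ, hrμ⟩ := hs.exists_mem_open
    ((isOpen_lt continuous_norm continuous_const).inter (isOpen_lt continuous_const g.continuous))
    hU
  exact ⟨μ, hμs, hμ.le, hrμ⟩

section Pairing

variable {E G : Type*} [NormedAddCommGroup E] [NormedSpace ℝ E]
  [NormedAddCommGroup G] [NormedSpace ℝ G]

def tensorPairing (u : G →L[ℝ] StrongDual ℝ E) : E ⊗[ℝ] G →ₗ[ℝ] ℝ :=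
  TensorProduct.lift (ContinuousLinearMap.coeLM ℝ ∘ₗ u.toLinearMap).flip

@[simp]
lemma tensorPairing_tmul (u : G →L[ℝ] StrongDual ℝ E) (μ : E) (h : G) :
    tensorPairing u (μ ⊗ₜ h) = u h μ :=
  rfl

lemma tensorPairing_sum_tmul (u : G →L[ℝ] StrongDual ℝ E) {m : ℕ} (μ : Fin m → E)
    (h : Fin m → G) : tensorPairing u (∑ j, μ j ⊗ₜ h j) = ∑ j, u (h j) (μ j) := by
  simp

lemma abs_tensorPairing_sum_tmul_le {p q : ℝ} (hpq : p.HolderConjugate q)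
    (u : G →L[ℝ] StrongDual ℝ E) {m : ℕ} (μ : Fin m → E) (h : Fin m → G) :
    |tensorPairing u (∑ j, μ j ⊗ₜ h j)| ≤ strongLp p μ * strongLp q (fun j => u (h j)) := by
  rw [tensorPairing_sum_tmul]
  calc |∑ j, u (h j) (μ j)|
      ≤ ∑ j, ‖μ j‖ * ‖u (h j)‖ := (abs_sum_le_sum_abs _ _).trans <| sum_le_sum fun j _ => by
        rw [← Real.norm_eq_abs, mul_comm]; exact (u (h j)).le_opNorm _
    _ ≤ _ := Real.inner_le_Lp_mul_Lq_of_nonneg univ hpq (fun _ _ => norm_nonneg _)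
        (fun _ _ => norm_nonneg _)

lemma gpNorm_sum_tmul_le (p q : ℝ) {m : ℕ} (n : Fin m → E) (h : Fin m → G) :
    gpNorm p q (∑ j, n j ⊗ₜ h j) ≤ strongLp p n * weakLp q h :=
  csInf_le ⟨0, fun _ ⟨_, _, _, _, hr⟩ => hr ▸ mul_nonneg (strongLp_nonneg _ _) (weakLp_nonneg _ _)⟩
    ⟨m, n, h, rfl, rfl⟩

lemma le_gpNorm {p q : ℝ} {z : E ⊗[ℝ] G} {b : ℝ}
    (hb : ∀ (m : ℕ) (n : Fin m → E) (h : Fin m → G), z = ∑ j, n j ⊗ₜ h j →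
      b ≤ strongLp p n * weakLp q h) :
    b ≤ gpNorm p q z := by
  obtain ⟨m, n, h, hz⟩ := TensorProduct.exists_sum_tmul_eq z
  exact le_csInf ⟨_, m, n, h, hz, rfl⟩ fun _ ⟨m, n, h, hz, hr⟩ => hr ▸ hb m n h hz

lemma abs_tensorPairing_le_gpNorm {p q : ℝ} (hpq : p.HolderConjugate q)
    {u : G →L[ℝ] StrongDual ℝ E} {K : ℝ} (hK0 : 0 < K)
    (hu : ∀ (m : ℕ) (h : Fin m → G), strongLp q (fun j => u (h j)) ≤ K * weakLp q h)
    (z : E ⊗[ℝ] G) : |tensorPairing u z| ≤ K * gpNorm p q z := by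
  rw [← div_le_iff₀' hK0]
  refine le_gpNorm fun m n h hz => ?_
  rw [div_le_iff₀' hK0, hz]
  calc |tensorPairing u (∑ j, n j ⊗ₜ h j)|
      ≤ strongLp p n * strongLp q (fun j => u (h j)) := abs_tensorPairing_sum_tmul_le hpq u n h
    _ ≤ strongLp p n * (K * weakLp q h) := by gcongr; exacts [strongLp_nonneg _ _, hu m h]
    _ = K * (strongLp p n * weakLp q h) := by ring

variable {p q : ℝ} {S : Submodule ℝ E} {u : G →L[ℝ] StrongDual ℝ E} {K : ℝ}

lemma sum_mul_norm_le_of_abs_tensorPairing_le (hp : 0 ≤ p) (hS : Dense (S : Set E))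
    (hK0 : 0 ≤ K)
    (hK : ∀ (m : ℕ) (μ : Fin m → E) (h : Fin m → G), (∀ j, μ j ∈ S) →
      |tensorPairing u (∑ j, μ j ⊗ₜ h j)| ≤ K * gpNorm p q (∑ j, μ j ⊗ₜ h j))
    {m : ℕ} (x : Fin m → G) (c : Fin m → ℝ) (hc : ∀ j, 0 ≤ c j) :
    ∑ j, c j * ‖u (x j)‖ ≤ K * weakLp q x * strongLp p c := by
  set C := ∑ j, c j
  have hC : 0 ≤ C := sum_nonneg fun j _ => hc j
  refine le_of_forall_pos_le_add fun ε hε => ?_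
  set η := ε / (C + 1)
  have hη : 0 < η := by positivity
  have hηC : η * C ≤ ε := by
    rw [div_mul_eq_mul_div, div_le_iff₀ (by positivity)]; nlinarith
  choose μ hμS hμ1 hμ using fun j =>
    exists_mem_norm_le_one_lt_apply hS (u (x j)) (sub_lt_self ‖u (x j)‖ hη)
  have hcμ : strongLp p (fun j => c j • μ j) ≤ strongLp p c := strongLp_mono hp fun j => by
    rw [norm_smul]; exact mul_le_of_le_one_right (norm_nonneg _) (hμ1 j)
  calc ∑ j, c j * ‖u (x j)‖
      ≤ ∑ j, c j * (u (x j) (μ j) + η) :=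
        sum_le_sum fun j _ => mul_le_mul_of_nonneg_left (by linarith [hμ j]) (hc j)
    _ = tensorPairing u (∑ j, (c j • μ j) ⊗ₜ x j) + η * C := by
        simp [mul_add, sum_add_distrib, ← sum_mul, C, mul_comm]
    _ ≤ K * gpNorm p q (∑ j, (c j • μ j) ⊗ₜ x j) + ε := add_le_add
        ((le_abs_self _).trans (hK _ _ _ fun j => S.smul_mem _ (hμS j))) hηC
    _ ≤ K * (strongLp p (fun j => c j • μ j) * weakLp q x) + ε := by
        gcongr; exact gpNorm_sum_tmul_le p q _ x
    _ = K * weakLp q x * strongLp p (fun j => c j • μ j) + ε := by ring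
    _ ≤ K * weakLp q x * strongLp p c + ε := by
        gcongr; exact mul_nonneg hK0 (weakLp_nonneg q x)

theorem isPSumming_of_abs_tensorPairing_le (hpq : p.HolderConjugate q) (hS : Dense (S : Set E))
    (hK0 : 0 < K)
    (hK : ∀ (m : ℕ) (μ : Fin m → E) (h : Fin m → G), (∀ j, μ j ∈ S) →
      |tensorPairing u (∑ j, μ j ⊗ₜ h j)| ≤ K * gpNorm p q (∑ j, μ j ⊗ₜ h j)) :
    IsPSumming q u :=
  ⟨K, hK0, fun _ x => strongLp_le_of_forall_sum_mul_norm_le hpq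
    (mul_nonneg hK0.le (weakLp_nonneg q x))
    (sum_mul_norm_le_of_abs_tensorPairing_le hpq.nonneg hS hK0.le hK x)⟩

end Pairing

section FreeSpace

variable {Y W FY FW : Type*} [NormedAddCommGroup FY] [NormedSpace ℝ FY]
  [NormedAddCommGroup FW] [NormedSpace ℝ FW] {δY : Y → FY} {δW : W → FW} {T : Y → W}
  {Ts : StrongDual ℝ FW →L[ℝ] StrongDual ℝ FY}

lemma tensorPairing_sum_sub_tmul
    (hTs : ∀ (f : StrongDual ℝ FW) (x : Y), Ts f (δY x) = f (δW (T x))) {k : ℕ} (x y : Fin k → Y) (f : Fin k → StrongDual ℝ FW) :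
    tensorPairing Ts (∑ l, (δY (x l) - δY (y l)) ⊗ₜ f l) =
      ∑ l, (f l (δW (T (x l))) - f l (δW (T (y l)))) := by
  simp only [tensorPairing_sum_tmul, map_sub, hTs]

lemma sum_tmul_mem_span_range_tmul {G : Type*} [AddCommGroup G] [Module ℝ G] {m : ℕ}
    (μ : Fin m → FY) (h : Fin m → G) (hμ : ∀ j, μ j ∈ Submodule.span ℝ (Set.range δY)) :
    ∑ j, μ j ⊗ₜ h j ∈ Submodule.span ℝ (Set.range fun yh : Y × G => δY yh.1 ⊗ₜ[ℝ] yh.2) := by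
  suffices ∀ ν ∈ Submodule.span ℝ (Set.range δY), ∀ g : G,
      ν ⊗ₜ g ∈ Submodule.span ℝ (Set.range fun yh : Y × G => δY yh.1 ⊗ₜ[ℝ] yh.2) from
    Submodule.sum_mem _ fun j _ => this _ (hμ j) (h j)
  intro ν hν g
  induction hν using Submodule.span_induction with
  | mem _ hν => obtain ⟨y, rfl⟩ := hν; exact Submodule.subset_span ⟨(y, g), rfl⟩
  | zero => simp
  | add _ _ _ _ h₁ h₂ => rw [TensorProduct.add_tmul]; exact add_mem h₁ h₂
  | smul a _ _ h₁ => rw [← TensorProduct.smul_tmul']; exact Submodule.smul_mem _ a h₁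

lemma abs_tensorPairing_le_of_mem_span {y₀ : Y}
    (hδY : δY y₀ = 0) (hTs : ∀ (f : StrongDual ℝ FW) (x : Y), Ts f (δY x) = f (δW (T x)))
    {p q K : ℝ}
    (hK : ∀ (k : ℕ) (x y : Fin k → Y) (f : Fin k → StrongDual ℝ FW),
      |∑ l, (f l (δW (T (x l))) - f l (δW (T (y l))))| ≤
        K * gpNorm p q (∑ l, (δY (x l) - δY (y l)) ⊗ₜ[ℝ] f l))
    {z : FY ⊗[ℝ] StrongDual ℝ FW}
    (hz : z ∈ Submodule.span ℝ (Set.range fun yf : Y × StrongDual ℝ FW => δY yf.1 ⊗ₜ[ℝ] yf.2)) :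
    |tensorPairing Ts z| ≤ K * gpNorm p q z := by
  obtain ⟨n, a, g, rfl⟩ := Submodule.mem_span_set'.1 hz
  choose yf hyf using fun i => (g i).2
  have hrep : ∑ i, a i • (g i : FY ⊗[ℝ] StrongDual ℝ FW) =
      ∑ i, (δY (yf i).1 - δY y₀) ⊗ₜ (a i • (yf i).2) :=
    sum_congr rfl fun i _ => by rw [← hyf i, hδY, sub_zero, TensorProduct.tmul_smul]
  rw [hrep, tensorPairing_sum_sub_tmul hTs]
  exact hK n _ _ _

end FreeSpace

theorem msStronglyLipPSumming_iff_adjoint_pSumming_general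
    {Y W FY FW : Type*} [MetricSpace Y] [Inhabited Y] [MetricSpace W]
    [NormedAddCommGroup FY] [NormedSpace ℝ FY] [CompleteSpace FY]
    [NormedAddCommGroup FW] [NormedSpace ℝ FW]
    {δY : Y → FY} {δW : W → FW}
    (hFY : IsFreeSpace Y default FY δY)
    {p q : ℝ} (hpq : p.HolderConjugate q)
    (T : Y → W)
    (Ts : StrongDual ℝ FW →L[ℝ] StrongDual ℝ FY)
    (hTs : ∀ (f : StrongDual ℝ FW) (x : Y), Ts f (δY x) = f (δW (T x))) :
    MSStronglyLipPSumming p q δY δW T ↔ IsPSumming q Ts := by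
  constructor
  · rintro ⟨K, hK0, hK⟩
    exact isPSumming_of_abs_tensorPairing_le hpq
      (Submodule.dense_iff_topologicalClosure_eq_top.2 hFY.dense_span) hK0 fun _ μ h hμ =>
        abs_tensorPairing_le_of_mem_span hFY.map_base hTs hK
          (sum_tmul_mem_span_range_tmul μ h hμ)
  · rintro ⟨K, hK0, hK⟩
    refine ⟨K, hK0, fun k x y f => ?_⟩
    rw [← tensorPairing_sum_sub_tmul hTs]
    exact abs_tensorPairing_le_gpNorm hpq hK0 hK _

/-- Corollary 3.3: `T` is MS-strongly Lipschitz `p`-summing iff the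
Lipschitz adjoint `T^# : W^# → Y^#` (realized as the adjoint `Ts` of the linearization)
is `p*`-summing. -/
theorem msStronglyLipPSumming_iff_adjoint_pSumming
    {Y W FY FW : Type*} [MetricSpace Y] [Inhabited Y] [MetricSpace W] [Inhabited W]
    [NormedAddCommGroup FY] [NormedSpace ℝ FY] [CompleteSpace FY]
    [NormedAddCommGroup FW] [NormedSpace ℝ FW] [CompleteSpace FW]
    {δY : Y → FY} {δW : W → FW}
    (hFY : IsFreeSpace Y default FY δY) (hFW : IsFreeSpace W default FW δW)
    {p q : ℝ} (hpq : p.HolderConjugate q)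
    (T : Y → W) (hTlip : ∃ K, LipschitzWith K T) (hT0 : T default = default)
    (Ts : StrongDual ℝ FW →L[ℝ] StrongDual ℝ FY)
    (hTs : ∀ (f : StrongDual ℝ FW) (x : Y), Ts f (δY x) = f (δW (T x))) :
    MSStronglyLipPSumming p q δY δW T ↔ IsPSumming q Ts :=
  msStronglyLipPSumming_iff_adjoint_pSumming_general hFY hpq T Ts hTs
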